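/- Consider the representation M of the equioriented type A_{2n−1} quiver with M_p = V for all 1 ≤ p ≤ 2n−1 and structure maps f′_p : M_p → M_{p+1} for 1 ≤ p ≤ 2n−2, and set M^0 := M_1 ⊕ ⋯ ⊕ M_{2n−1}. Then: (a) there exists a bilinear form ⟨−,−⟩ on M^0 which is nondegenerate, satisfies ⟨x,y⟩ = −⟨y,x⟩ for all x,y, satisfies ⟨M_p, M_q⟩ = 0 whenever p + q ≠ 2n, restricts on M_n × M_n to ω_V, and satisfies ⟨f′_p(x), y⟩ + ⟨x, f′_{2n−1−p}(y)⟩ = 0 for all 1 ≤ p ≤ 2n−2, x ∈ M_p and y ∈ M_{2n−1−p}; (b) for every such form ⟨−,−⟩, the map N ↦ (N_1,…,N_n) is a bijection from the set of Lagrangian subrepresentations N of M with dim N_p = p for all 1 ≤ p ≤ 2n−1 onto SpF^𝐢_{2n}; here a subrepresentation N of M is a family of subspaces N_p ⊆ M_p with f′_p(N_p) ⊆ N_{p+1} for all p, and N is Lagrangian if N_1 ⊕ ⋯ ⊕ N_{2n−1} equals {m ∈ M^0 : ⟨x, m⟩ = 0 for all x ∈ N_1 ⊕ ⋯ ⊕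 N_{2n−1}}. -/

import Mathlib

open Module

/-- `V = ℂ^{2n}`, with the standard basis `v_1, …, v_{2n}` given (0-indexed) by the
coordinate functions. -/
abbrev Vs (n : ℕ) := Fin (2 * n) → ℂ

open scoped Classical in
/-- The projection `pr_K` killing the coordinates in `K` (0-indexed: the basis vector
`v_{a+1}` corresponds to the coordinate `a`). -/
noncomputable def prK (N : ℕ) (K : Set (Fin N)) : (Fin N → ℂ) →ₗ[ℂ] (Fin N → ℂ) where
  toFun x := fun a => if a ∈ K then 0 else x a
  map_add' x y := by funext a; by_cases h : a ∈ K <;> simp [h]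
  map_smul' c x := by funext a; by_cases h : a ∈ K <;> simp [h]

/-- The symplectic form `ω_V` on `V = ℂ^{2n}`: `ω_V(v_a, v_b) = 0` unless
`a + b = 2n + 1` (1-indexed) and `ω_V(v_i, v_{2n+1-i}) = 1` for `1 ≤ i ≤ n`. -/
noncomputable def omegaV (n : ℕ) : LinearMap.BilinForm ℂ (Vs n) :=
  LinearMap.mk₂ ℂ
    (fun x y => ∑ a : Fin (2 * n), (if (a : ℕ) < n then (1 : ℂ) else -1) * (x a * y a.rev))
    (fun x x' y => by simp [add_mul, mul_add, Finset.sum_add_distrib])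
    (fun c x y => by simp [Finset.mul_sum, mul_assoc, mul_left_comm, mul_comm])
    (fun x y y' => by simp [mul_add, Finset.sum_add_distrib])
    (fun c x y => by simp [Finset.mul_sum, mul_assoc, mul_left_comm, mul_comm])

/-- The structure maps of linear degenerations: `f_k = pr_{{k+1}}` (killing the basis
vector `v_{k+1}`, which is the 0-indexed coordinate `k`) if `k ∈ J`, the identity
otherwise. -/
noncomputable def fdeg (n : ℕ) (J : Finset ℕ) (k : ℕ) : Vs n →ₗ[ℂ] Vs n :=
  if k ∈ J then prK (2 * n) {a | (a : ℕ) = k} else LinearMap.id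

/-- `𝐢′ = 𝐢 ∪ {2n-1-i : i ∈ 𝐢}`. -/
def Iprime (n : ℕ) (I : Finset ℕ) : Finset ℕ := I ∪ I.image (fun i => 2 * n - 1 - i)

/-- The linear degenerate symplectic flag variety `SpF^𝐢_{2n}`, as a set of tuples
`(V_1, …, V_n)` of subspaces of `V = ℂ^{2n}` (the tuple entry of index `k : Fin n`
is `V_{k+1}`). -/
noncomputable def SpF (n : ℕ) (I : Finset ℕ) : Set (Fin n → Submodule ℂ (Vs n)) :=
  {Vt | (∀ k : Fin n, finrank ℂ ↥(Vt k) = k.1 + 1) ∧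
    (∀ k : ℕ, ∀ hk : k + 1 < n,
      (Vt ⟨k, by omega⟩).map (fdeg n I (k + 1)) ≤ Vt ⟨k + 1, hk⟩) ∧
    (∀ h : n - 1 < n, Vt ⟨n - 1, h⟩ = (omegaV n).orthogonal (Vt ⟨n - 1, h⟩))}

/-- The linear degenerate flag variety `F^{J}_{2n}` for `J ⊆ {1, …, 2n-1}`, as a set
of tuples `(V_1, …, V_{2n-1})` of subspaces of `V = ℂ^{2n}`. -/
noncomputable def Fpr (n : ℕ) (J : Finset ℕ) : Set (Fin (2 * n - 1) → Submodule ℂ (Vs n)) :=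
  {Vt | (∀ k : Fin (2 * n - 1), finrank ℂ ↥(Vt k) = k.1 + 1) ∧
    (∀ k : ℕ, ∀ hk : k + 1 < 2 * n - 1,
      (Vt ⟨k, by omega⟩).map (fdeg n J (k + 1)) ≤ Vt ⟨k + 1, hk⟩)}
/-- The conditions of part (a) on a bilinear form `⟨-,-⟩` on
`M^0 = M_1 ⊕ ⋯ ⊕ M_{2n-1}`, where each `M_p = V` (0-indexed: the component `p` of a
tuple is `M_{p+1}`): nondegenerate, antisymmetric, `⟨M_p, M_q⟩ = 0` for `p + q ≠ 2n`,
restricting to `ω_V` on `M_n × M_n`, and satisfying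
`⟨f′_p(x), y⟩ + ⟨x, f′_{2n-1-p}(y)⟩ = 0` for `1 ≤ p ≤ 2n-2`, `x ∈ M_p`,
`y ∈ M_{2n-1-p}`. -/
def GoodForm (n : ℕ) (I : Finset ℕ)
    (B : LinearMap.BilinForm ℂ (Fin (2 * n - 1) → Vs n)) : Prop :=
  (∀ v, (∀ w, B v w = 0) → v = 0) ∧
  (∀ v w, B v w = - B w v) ∧
  (∀ p q : Fin (2 * n - 1), (p.1 + 1) + (q.1 + 1) ≠ 2 * n →
    ∀ v w : Vs n, B (Pi.single p v) (Pi.single q w) = 0) ∧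
  (∀ h : n - 1 < 2 * n - 1, ∀ v w : Vs n,
    B (Pi.single ⟨n - 1, h⟩ v) (Pi.single ⟨n - 1, h⟩ w) = omegaV n v w) ∧
  (∀ p : ℕ, ∀ hp1 : 1 ≤ p, ∀ hp2 : p ≤ 2 * n - 2, ∀ x y : Vs n,
    B (Pi.single (⟨p, by omega⟩ : Fin (2 * n - 1)) (fdeg n (Iprime n I) p x))
        (Pi.single (⟨2 * n - 2 - p, by omega⟩ : Fin (2 * n - 1)) y)
      + B (Pi.single (⟨p - 1, by omega⟩ : Fin (2 * n - 1)) x)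
          (Pi.single (⟨2 * n - 1 - p, by omega⟩ : Fin (2 * n - 1))
            (fdeg n (Iprime n I) (2 * n - 1 - p) y)) = 0)

/-!
Since `⟨M_p, M_q⟩ = 0` unless `p + q = 2n`, the form is the sum of the pairings
`b_p : M_p × M_{2n-p} → ℂ`, each nondegenerate, and `⊕ N_p` is Lagrangian iff
`N_{2n-p}` is the `b_p`-orthogonal of `N_p` for every `p`.
A Lagrangian subrepresentation is thus determined by `N_1, …, N_n`, with `N_n` Lagrangian for
`ω_V`. Conversely, completing a point of `SpF^𝐢_{2n}` by orthogonals gives a subrepresentation,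
because `f′_p` and `f′_{2n-1-p}` are adjoint up to sign. For (a), take
`⟨x, y⟩ = ∑_p ± ω_V(x_p, y_{2n-p})` with alternating signs: `pr_{k+1}` and `pr_{2n-k}` are
`ω_V`-adjoint since `v_{k+1}` and `v_{2n-k}` are `ω_V`-dual.
-/

open Module
open LinearMap (BilinForm)

theorem Submodule.single_mem_pi_univ_iff {ι R : Type*} {φ : ι → Type*} [DecidableEq ι]
    [Semiring R] [∀ i, AddCommMonoid (φ i)] [∀ i, Module R (φ i)]
    {N : (i : ι) → Submodule R (φ i)} {i : ι} {v : φ i} :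
    Pi.single i v ∈ Submodule.pi Set.univ N ↔ v ∈ N i := by
  refine ⟨fun h => by simpa using h i trivial, fun h j _ => ?_⟩
  rcases eq_or_ne j i with rfl | hj
  · simpa using h
  · simp [Pi.single_eq_of_ne hj]

theorem Submodule.pi_univ_injective {ι R : Type*} {φ : ι → Type*}
    [Semiring R] [∀ i, AddCommMonoid (φ i)] [∀ i, Module R (φ i)] :
    Function.Injective (Submodule.pi Set.univ : ((i : ι) → Submodule R (φ i)) → _) := by
  classical
  intro N N' h
  funext i
  ext v
  rw [← Submodule.single_mem_pi_univ_iff, h, Submodule.single_mem_pi_univ_iff]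

namespace LinearMap.BilinForm

theorem map_orthogonal_le_orthogonal {R M : Type*} [CommRing R] [AddCommGroup M] [Module R M]
    {b b' : BilinForm R M} {f g : M →ₗ[R] M} (hfg : ∀ v w, b' (f v) w + b v (g w) = 0)
    {U U' : Submodule R M} (hU : U.map f ≤ U') :
    (b'.orthogonal U').map g ≤ b.orthogonal U := by
  rintro _ ⟨w, hw, rfl⟩
  refine mem_orthogonal_iff.mpr fun v hv => ?_
  have hfv : b' (f v) w = 0 := mem_orthogonal_iff.mp hw _ (hU (Submodule.mem_map_of_mem hv))
  simpa [hfv] using hfg v w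

theorem orthogonal_orthogonal_of_antisymm {K V : Type*} [Field K] [AddCommGroup V] [Module K V]
    [FiniteDimensional K V] {b b' : BilinForm K V} (hb : b.Nondegenerate)
    (hb' : b'.Nondegenerate) (h : ∀ v w, b' v w = - b w v) (W : Submodule K V) :
    b'.orthogonal (b.orthogonal W) = W := by
  have hle : W ≤ b'.orthogonal (b.orthogonal W) := fun w hw =>
    mem_orthogonal_iff.mpr fun u hu => by
      rw [h, (mem_orthogonal_iff.mp hu) w hw, neg_zero]
  refine (Submodule.eq_of_le_of_finrank_le hle ?_).symm
  rw [finrank_orthogonal hb', finrank_orthogonal hb]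
  have := Submodule.finrank_le W
  omega

end LinearMap.BilinForm

section BlockForm

variable {R V : Type*} [CommRing R] [AddCommGroup V] [Module R V] {m : ℕ}

def blockForm (B : BilinForm R (Fin m → V)) (p : Fin m) : BilinForm R V :=
  B.compl₁₂ (LinearMap.single R (fun _ => V) p) (LinearMap.single R (fun _ => V) p.rev)

@[simp]
theorem blockForm_apply (B : BilinForm R (Fin m → V)) (p : Fin m) (v w : V) :
    blockForm B p v w = B (Pi.single p v) (Pi.single p.rev w) := rfl

def IsBlockAntidiagonal (B : BilinForm R (Fin m → V)) : Prop :=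
  ∀ p q : Fin m, q ≠ p.rev → ∀ v w, B (Pi.single p v) (Pi.single q w) = 0

namespace IsBlockAntidiagonal

variable {B : BilinForm R (Fin m → V)} (hB : IsBlockAntidiagonal B)
include hB

theorem apply_single_left (p : Fin m) (v : V) (y : Fin m → V) :
    B (Pi.single p v) y = blockForm B p v (y p.rev) := by
  conv_lhs => rw [← Finset.univ_sum_single y, map_sum]
  exact Finset.sum_eq_single p.rev (fun q _ hq => hB p q hq v _) (by simp)

theorem apply_eq_sum (x y : Fin m → V) :
    B x y = ∑ p, blockForm B p (x p) (y p.rev) := by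
  conv_lhs => rw [← Finset.univ_sum_single x, map_sum, LinearMap.sum_apply]
  simp only [hB.apply_single_left]

theorem orthogonal_pi (N : Fin m → Submodule R V) :
    B.orthogonal (Submodule.pi Set.univ N) =
      Submodule.pi Set.univ fun q => (blockForm B q.rev).orthogonal (N q.rev) := by
  ext y
  simp only [LinearMap.BilinForm.mem_orthogonal_iff, Submodule.mem_pi, Set.mem_univ,
    true_imp_iff]
  refine ⟨fun h q v hv => ?_, fun h x hx => ?_⟩
  · have := h _ fun i => Submodule.single_mem_pi_univ_iff.mpr hv i trivial
    rwa [hB.apply_single_left, Fin.rev_rev] at this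
  · rw [hB.apply_eq_sum]
    refine Finset.sum_eq_zero fun p _ => ?_
    simpa using h p.rev (x p) (by simpa using hx p)

theorem pi_eq_orthogonal_iff (N : Fin m → Submodule R V) :
    Submodule.pi Set.univ N = B.orthogonal (Submodule.pi Set.univ N) ↔
      ∀ q, N q = (blockForm B q.rev).orthogonal (N q.rev) := by
  rw [hB.orthogonal_pi, Submodule.pi_univ_injective.eq_iff, funext_iff]

end IsBlockAntidiagonal

end BlockForm

theorem Fin.rev_mk_sub_one_eq_self {n : ℕ} (h : n - 1 < 2 * n - 1) :
    (⟨n - 1, h⟩ : Fin (2 * n - 1)).rev = ⟨n - 1, h⟩ :=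
  Fin.ext (by simp; omega)

section StandardForm

variable {n : ℕ}

theorem omegaV_apply (x y : Vs n) :
    omegaV n x y =
      ∑ a : Fin (2 * n), (if (a : ℕ) < n then (1 : ℂ) else -1) * (x a * y a.rev) :=
  rfl

theorem omegaV_swap (x y : Vs n) : omegaV n y x = - omegaV n x y := by
  rw [omegaV_apply, omegaV_apply, ← Equiv.sum_comp Fin.revPerm, ← Finset.sum_neg_distrib]
  refine Finset.sum_congr rfl fun a _ => ?_
  have := a.isLt
  simp only [Fin.revPerm_apply, Fin.rev_rev, Fin.val_rev]
  split_ifs <;> first | omega | ring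

theorem omegaV_separatingLeft : (omegaV n).SeparatingLeft := by
  intro x hx
  funext a
  have h := hx (Pi.single a.rev 1)
  rw [omegaV_apply, Finset.sum_eq_single a (fun b _ hb => by simp [Fin.rev_injective.ne hb])
    (by simp)] at h
  split_ifs at h <;> simpa using h

theorem omegaV_prK_left (K : Set (Fin (2 * n))) (x y : Vs n) :
    omegaV n (prK _ K x) y = omegaV n x (prK _ (Fin.rev ⁻¹' K) y) := by
  simp only [omegaV_apply, prK, LinearMap.coe_mk, AddHom.coe_mk]
  refine Finset.sum_congr rfl fun a _ => ?_
  by_cases ha : a ∈ K <;> simp [ha]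

theorem omegaV_fdeg_left {J : Finset ℕ} {p : ℕ} (hp : p < 2 * n)
    (hJ : 2 * n - 1 - p ∈ J ↔ p ∈ J) (x y : Vs n) :
    omegaV n (fdeg n J p x) y = omegaV n x (fdeg n J (2 * n - 1 - p) y) := by
  unfold fdeg
  by_cases h : p ∈ J
  · rw [if_pos h, if_pos (hJ.mpr h), omegaV_prK_left]
    congr 3
    ext a
    simp only [Set.mem_preimage, Set.mem_ofPred_eq, Fin.val_rev]
    omega
  · rw [if_neg h, if_neg (mt hJ.mp h)]
    rfl

theorem sub_mem_Iprime_iff {I : Finset ℕ} (hI : ∀ i ∈ I, i < 2 * n) {p : ℕ}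
    (hp : p < 2 * n) :
    2 * n - 1 - p ∈ Iprime n I ↔ p ∈ Iprime n I := by
  simp only [Iprime, Finset.mem_union, Finset.mem_image]
  constructor
  · rintro (h | ⟨i, hi, hip⟩)
    · exact .inr ⟨_, h, by omega⟩
    · have := hI i hi
      exact .inl (by rwa [show p = i by omega])
  · rintro (h | ⟨i, hi, rfl⟩)
    · exact .inr ⟨p, h, rfl⟩
    · have := hI i hi
      exact .inl (by rwa [show 2 * n - 1 - (2 * n - 1 - i) = i by omega])

-- The sign is `+1` on the middle component and flips between neighbouring components, which is
-- what compatibility with the maps `f′_p` requires.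
noncomputable def stdForm (n : ℕ) : BilinForm ℂ (Fin (2 * n - 1) → Vs n) :=
  ∑ p : Fin (2 * n - 1),
    (-1 : ℂ) ^ (p.val + n + 1) •
      (omegaV n).compl₁₂ (LinearMap.proj p) (LinearMap.proj p.rev)

theorem stdForm_apply (x y : Fin (2 * n - 1) → Vs n) :
    stdForm n x y = ∑ p, (-1 : ℂ) ^ (p.val + n + 1) * omegaV n (x p) (y p.rev) := by
  simp [stdForm]

theorem stdForm_apply_single (x : Fin (2 * n - 1) → Vs n) (q : Fin (2 * n - 1)) (w : Vs n) :
    stdForm n x (Pi.single q w) = (-1 : ℂ) ^ (q.rev.val + n + 1) * omegaV n (x q.rev) w := by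
  rw [stdForm_apply, Finset.sum_eq_single q.rev (fun p _ hp => ?_) (by simp), Fin.rev_rev,
    Pi.single_eq_same]
  rw [Pi.single_eq_of_ne (fun h => hp (by rw [← h, Fin.rev_rev])), map_zero, mul_zero]

theorem neg_one_pow_val_rev (p : Fin (2 * n - 1)) :
    (-1 : ℂ) ^ (p.rev.val + n + 1) = (-1) ^ (p.val + n + 1) := by
  rw [neg_one_pow_eq_pow_mod_two, neg_one_pow_eq_pow_mod_two (n := p.val + n + 1), Fin.val_rev]
  have := p.isLt
  congr 1
  omega

theorem goodForm_stdForm {I : Finset ℕ} (hI : ∀ i ∈ I, i < 2 * n) :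
    GoodForm n I (stdForm n) := by
  refine ⟨fun x hx => ?_, fun x y => ?_, fun p q hpq v w => ?_, fun h v w => ?_,
    fun p hp1 hp2 x y => ?_⟩
  · funext p
    refine omegaV_separatingLeft _ fun w => ?_
    simpa [stdForm_apply_single] using hx (Pi.single p.rev w)
  · rw [stdForm_apply, stdForm_apply, ← Equiv.sum_comp Fin.revPerm, ← Finset.sum_neg_distrib]
    refine Finset.sum_congr rfl fun p _ => ?_
    rw [Fin.revPerm_apply, Fin.rev_rev, neg_one_pow_val_rev, omegaV_swap]
    ring
  · rw [stdForm_apply_single, Pi.single_eq_of_ne, map_zero, LinearMap.zero_apply, mul_zero]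
    rintro rfl
    rw [Fin.val_rev] at hpq
    omega
  · rw [stdForm_apply_single, Fin.rev_mk_sub_one_eq_self, Pi.single_eq_same,
      neg_one_pow_eq_pow_mod_two, show (n - 1 + n + 1) % 2 = 0 by omega, pow_zero, one_mul]
  · have hsymm : 2 * n - 1 - p ∈ Iprime n I ↔ p ∈ Iprime n I :=
      sub_mem_Iprime_iff hI (by omega)
    have h1 : (⟨2 * n - 2 - p, by omega⟩ : Fin (2 * n - 1)).rev = ⟨p, by omega⟩ :=
      Fin.ext (by simp; omega)
    have h2 : (⟨2 * n - 1 - p, by omega⟩ : Fin (2 * n - 1)).rev = ⟨p - 1, by omega⟩ :=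
      Fin.ext (by simp; omega)
    rw [stdForm_apply_single, stdForm_apply_single, h1, h2, Pi.single_eq_same, Pi.single_eq_same,
      omegaV_fdeg_left (by omega) hsymm, show p - 1 + n + 1 = p + n by omega, pow_succ]
    ring

end StandardForm

theorem mem_Iprime_iff_of_lt {n : ℕ} {I : Finset ℕ} (hI : ∀ i ∈ I, i < n) {k : ℕ}
    (hk : k < n) :
    k ∈ Iprime n I ↔ k ∈ I := by
  simp only [Iprime, Finset.mem_union, Finset.mem_image, or_iff_left_iff_imp]
  rintro ⟨i, hi, rfl⟩
  have := hI i hi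
  omega

theorem fdeg_Iprime_of_lt {n : ℕ} {I : Finset ℕ} (hI : ∀ i ∈ I, i < n) {k : ℕ}
    (hk : k < n) :
    fdeg n (Iprime n I) k = fdeg n I k := by
  simp only [fdeg, mem_Iprime_iff_of_lt hI hk]

namespace GoodForm

variable {n : ℕ} {I : Finset ℕ} {B : BilinForm ℂ (Fin (2 * n - 1) → Vs n)}
  (hB : GoodForm n I B)
include hB

theorem isBlockAntidiagonal : IsBlockAntidiagonal B := fun p q hq v w =>
  hB.2.2.1 p q (fun h => hq (Fin.ext (by rw [Fin.val_rev]; omega))) v w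

theorem blockForm_rev (p : Fin (2 * n - 1)) (v w : Vs n) :
    blockForm B p.rev v w = - blockForm B p w v := by
  rw [blockForm_apply, blockForm_apply, Fin.rev_rev]
  exact hB.2.1 _ _

theorem nondegenerate_blockForm (p : Fin (2 * n - 1)) : (blockForm B p).Nondegenerate := by
  have hleft : ∀ q, (blockForm B q).SeparatingLeft := fun q v hv => by
    have : Pi.single q v = 0 := hB.1 _ fun y => by
      rw [hB.isBlockAntidiagonal.apply_single_left]
      exact hv _
    simpa using congrFun this q
  refine ⟨hleft p, fun w hw => hleft p.rev w fun v => ?_⟩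
  rw [hB.blockForm_rev, hw, neg_zero]

theorem finrank_orthogonal_blockForm (p : Fin (2 * n - 1)) (W : Submodule ℂ (Vs n)) :
    finrank ℂ ((blockForm B p).orthogonal W) = 2 * n - finrank ℂ W := by
  rw [LinearMap.BilinForm.finrank_orthogonal (hB.nondegenerate_blockForm p), finrank_fin_fun]

theorem orthogonal_blockForm_rev_orthogonal (p : Fin (2 * n - 1)) (W : Submodule ℂ (Vs n)) :
    (blockForm B p.rev).orthogonal ((blockForm B p).orthogonal W) = W :=
  LinearMap.BilinForm.orthogonal_orthogonal_of_antisymm (hB.nondegenerate_blockForm p)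
    (hB.nondegenerate_blockForm p.rev) (hB.blockForm_rev p) W

theorem blockForm_middle (h : n - 1 < 2 * n - 1) : blockForm B ⟨n - 1, h⟩ = omegaV n := by
  refine LinearMap.ext₂ fun v w => ?_
  rw [blockForm_apply, Fin.rev_mk_sub_one_eq_self]
  exact hB.2.2.2.1 h v w

theorem blockForm_fdeg_add_blockForm_fdeg (J' J : Fin (2 * n - 1)) (hJ : J.val = J'.val + 1)
    (v w : Vs n) :
    blockForm B J (fdeg n (Iprime n I) J v) w
      + blockForm B J' v (fdeg n (Iprime n I) J'.rev w) = 0 := by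
  have h := hB.2.2.2.2 J (by omega) (by omega) v w
  have e1 : (⟨2 * n - 2 - J, by omega⟩ : Fin (2 * n - 1)) = J.rev := Fin.ext (by simp; omega)
  have e2 : (⟨J - 1, by omega⟩ : Fin (2 * n - 1)) = J' := Fin.ext (by simp; omega)
  have e3 : (⟨2 * n - 1 - J, by omega⟩ : Fin (2 * n - 1)) = J'.rev := Fin.ext (by simp; omega)
  have e4 : 2 * n - 1 - J.val = J'.rev.val := by simp; omega
  rw [e1, e2, e3, e4] at h
  exact h

end GoodForm

section LagrangianCompletion

variable {n : ℕ}

def lagrangianSubreps (n : ℕ) (I : Finset ℕ) (B : BilinForm ℂ (Fin (2 * n - 1) → Vs n)) :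
    Set (Fin (2 * n - 1) → Submodule ℂ (Vs n)) :=
  {Nt | (∀ p : ℕ, ∀ hp : p + 1 < 2 * n - 1,
      (Nt ⟨p, by omega⟩).map (fdeg n (Iprime n I) (p + 1)) ≤ Nt ⟨p + 1, hp⟩) ∧
    (∀ p : Fin (2 * n - 1), finrank ℂ ↥(Nt p) = p.1 + 1) ∧
    Submodule.pi Set.univ Nt = B.orthogonal (Submodule.pi Set.univ Nt)}

theorem Fin.val_lt_two_mul_sub_one (k : Fin n) : k.val < 2 * n - 1 := by
  have := k.isLt
  omega

def lowerPart (Nt : Fin (2 * n - 1) → Submodule ℂ (Vs n)) (k : Fin n) : Submodule ℂ (Vs n) :=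
  Nt ⟨k.1, k.val_lt_two_mul_sub_one⟩

noncomputable def lagrangianCompletion (B : BilinForm ℂ (Fin (2 * n - 1) → Vs n))
    (Vt : Fin n → Submodule ℂ (Vs n)) (q : Fin (2 * n - 1)) : Submodule ℂ (Vs n) :=
  if h : q.val < n then Vt ⟨q.val, h⟩
  else (blockForm B q.rev).orthogonal (Vt ⟨q.rev.val, by rw [Fin.val_rev]; omega⟩)

theorem lagrangianCompletion_of_lt (B : BilinForm ℂ (Fin (2 * n - 1) → Vs n))
    (Vt : Fin n → Submodule ℂ (Vs n)) {q : Fin (2 * n - 1)} (hq : q.val < n) :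
    lagrangianCompletion B Vt q = Vt ⟨q.val, hq⟩ :=
  dif_pos hq

theorem lagrangianCompletion_of_not_lt (B : BilinForm ℂ (Fin (2 * n - 1) → Vs n))
    (Vt : Fin n → Submodule ℂ (Vs n)) {q : Fin (2 * n - 1)} (hq : ¬ q.val < n) :
    lagrangianCompletion B Vt q =
      (blockForm B q.rev).orthogonal (lagrangianCompletion B Vt q.rev) := by
  rw [lagrangianCompletion, dif_neg hq, lagrangianCompletion_of_lt]

theorem lowerPart_lagrangianCompletion (B : BilinForm ℂ (Fin (2 * n - 1) → Vs n))
    (Vt : Fin n → Submodule ℂ (Vs n)) : lowerPart (lagrangianCompletion B Vt) = Vt :=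
  funext fun k => lagrangianCompletion_of_lt B Vt k.isLt

theorem lagrangianCompletion_map_le_of_lt (B : BilinForm ℂ (Fin (2 * n - 1) → Vs n))
    {I : Finset ℕ} (hI : ∀ i ∈ I, i < n) {Vt : Fin n → Submodule ℂ (Vs n)}
    (hVt : Vt ∈ SpF n I)
    {p : ℕ} (hp : p + 1 < n) :
    (lagrangianCompletion B Vt ⟨p, by omega⟩).map (fdeg n (Iprime n I) (p + 1))
      ≤ lagrangianCompletion B Vt ⟨p + 1, by omega⟩ := by
  rw [lagrangianCompletion_of_lt B Vt (show p < n by omega), lagrangianCompletion_of_lt B Vt hp,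
    fdeg_Iprime_of_lt hI hp]
  exact hVt.2.1 p hp

end LagrangianCompletion

namespace GoodForm

variable {n : ℕ} {I : Finset ℕ} {B : BilinForm ℂ (Fin (2 * n - 1) → Vs n)}
  (hB : GoodForm n I B)
include hB

theorem lagrangianCompletion_lowerPart {Nt : Fin (2 * n - 1) → Submodule ℂ (Vs n)}
    (hN : Submodule.pi Set.univ Nt = B.orthogonal (Submodule.pi Set.univ Nt)) :
    lagrangianCompletion B (lowerPart Nt) = Nt := by
  funext q
  by_cases hq : q.val < n
  · exact lagrangianCompletion_of_lt B _ hq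
  · rw [lagrangianCompletion_of_not_lt B _ hq,
      lagrangianCompletion_of_lt B _ (by rw [Fin.val_rev]; omega),
      (hB.isBlockAntidiagonal.pi_eq_orthogonal_iff Nt).mp hN q]
    rfl

theorem lowerPart_mem_SpF (hI : ∀ i ∈ I, i < n) {Nt : Fin (2 * n - 1) → Submodule ℂ (Vs n)}
    (hN : Nt ∈ lagrangianSubreps n I B) : lowerPart Nt ∈ SpF n I := by
  obtain ⟨hsub, hdim, hlag⟩ := hN
  refine ⟨fun k => hdim _, fun k hk => ?_, fun h => ?_⟩
  · rw [← fdeg_Iprime_of_lt hI hk]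
    exact hsub k (by omega)
  · have := (hB.isBlockAntidiagonal.pi_eq_orthogonal_iff Nt).mp hlag ⟨n - 1, by omega⟩
    rwa [Fin.rev_mk_sub_one_eq_self, hB.blockForm_middle] at this

theorem lagrangianCompletion_eq_orthogonal {Vt : Fin n → Submodule ℂ (Vs n)}
    (hmid : ∀ h : n - 1 < n, Vt ⟨n - 1, h⟩ = (omegaV n).orthogonal (Vt ⟨n - 1, h⟩))
    (q : Fin (2 * n - 1)) :
    lagrangianCompletion B Vt q =
      (blockForm B q.rev).orthogonal (lagrangianCompletion B Vt q.rev) := by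
  have hrev := Fin.val_rev q
  by_cases hq : q.val < n
  · by_cases hq' : q.rev.val < n
    · have hmid' : n - 1 < 2 * n - 1 := by omega
      obtain rfl : q = ⟨n - 1, hmid'⟩ := Fin.ext (show q.val = n - 1 by omega)
      rw [Fin.rev_mk_sub_one_eq_self, hB.blockForm_middle, lagrangianCompletion_of_lt B Vt hq]
      exact hmid _
    · rw [lagrangianCompletion_of_not_lt B Vt hq', Fin.rev_rev,
        hB.orthogonal_blockForm_rev_orthogonal]
  · exact lagrangianCompletion_of_not_lt B Vt hq

theorem finrank_lagrangianCompletion {Vt : Fin n → Submodule ℂ (Vs n)}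
    (hdim : ∀ k : Fin n, finrank ℂ (Vt k) = k.val + 1) (q : Fin (2 * n - 1)) :
    finrank ℂ (lagrangianCompletion B Vt q) = q.val + 1 := by
  by_cases hq : q.val < n
  · rw [lagrangianCompletion_of_lt B Vt hq, hdim]
  · have hrev : q.rev.val < n := by rw [Fin.val_rev]; omega
    rw [lagrangianCompletion_of_not_lt B Vt hq, hB.finrank_orthogonal_blockForm,
      lagrangianCompletion_of_lt B Vt hrev, hdim, Fin.val_rev]
    omega

theorem lagrangianCompletion_map_le (hI : ∀ i ∈ I, i < n) {Vt : Fin n → Submodule ℂ (Vs n)}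
    (hVt : Vt ∈ SpF n I) (p : ℕ) (hp : p + 1 < 2 * n - 1) :
    (lagrangianCompletion B Vt ⟨p, by omega⟩).map (fdeg n (Iprime n I) (p + 1))
      ≤ lagrangianCompletion B Vt ⟨p + 1, hp⟩ := by
  by_cases hlow : p + 1 < n
  · exact lagrangianCompletion_map_le_of_lt B hI hVt hlow
  let P : Fin (2 * n - 1) := ⟨p, by omega⟩
  let Q : Fin (2 * n - 1) := ⟨p + 1, hp⟩
  have hPQ : P.rev = ⟨Q.rev.val + 1, by simp [Q]; omega⟩ := Fin.ext (by simp [P, Q]; omega)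
  rw [hB.lagrangianCompletion_eq_orthogonal hVt.2.2 P,
    hB.lagrangianCompletion_eq_orthogonal hVt.2.2 Q]
  refine LinearMap.BilinForm.map_orthogonal_le_orthogonal
    (f := fdeg n (Iprime n I) P.rev) (fun v w => ?_) ?_
  · have := hB.blockForm_fdeg_add_blockForm_fdeg Q.rev P.rev (by rw [hPQ]) v w
    rwa [Fin.rev_rev] at this
  · rw [hPQ]
    exact lagrangianCompletion_map_le_of_lt B hI hVt (by simp [Q]; omega)

theorem lagrangianCompletion_mem (hI : ∀ i ∈ I, i < n) {Vt : Fin n → Submodule ℂ (Vs n)}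
    (hVt : Vt ∈ SpF n I) : lagrangianCompletion B Vt ∈ lagrangianSubreps n I B :=
  ⟨hB.lagrangianCompletion_map_le hI hVt, hB.finrank_lagrangianCompletion hVt.1,
    (hB.isBlockAntidiagonal.pi_eq_orthogonal_iff _).mpr
      (hB.lagrangianCompletion_eq_orthogonal hVt.2.2)⟩

end GoodForm

theorem lagrangian_subreps_biject_with_sympl_flag (n : ℕ)
    (I : Finset ℕ) (hI : ∀ i ∈ I, 1 ≤ i ∧ i ≤ n - 1) :
    (∃ B : LinearMap.BilinForm ℂ (Fin (2 * n - 1) → Vs n), GoodForm n I B) ∧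
    (∀ B : LinearMap.BilinForm ℂ (Fin (2 * n - 1) → Vs n), GoodForm n I B →
      Set.BijOn
        (fun (Nt : Fin (2 * n - 1) → Submodule ℂ (Vs n)) (k : Fin n) =>
          Nt ⟨k.1, by have := k.isLt; omega⟩)
        {Nt : Fin (2 * n - 1) → Submodule ℂ (Vs n) |
          (∀ p : ℕ, ∀ hp : p + 1 < 2 * n - 1,
            (Nt ⟨p, by omega⟩).map (fdeg n (Iprime n I) (p + 1)) ≤ Nt ⟨p + 1, hp⟩) ∧
          (∀ p : Fin (2 * n - 1), finrank ℂ ↥(Nt p) = p.1 + 1) ∧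
          Submodule.pi Set.univ Nt = B.orthogonal (Submodule.pi Set.univ Nt)}
        (SpF n I)) := by
  have hI' : ∀ i ∈ I, i < n := fun i hi => by have := hI i hi; omega
  have hI₂ : ∀ i ∈ I, i < 2 * n := fun i hi => by have := hI' i hi; omega
  refine ⟨⟨stdForm n, goodForm_stdForm hI₂⟩, fun B hB => ?_⟩
  exact Set.InvOn.bijOn (f' := lagrangianCompletion B)
    ⟨fun Nt hN => hB.lagrangianCompletion_lowerPart hN.2.2,
      fun Vt _ => lowerPart_lagrangianCompletion B Vt⟩
    (fun Nt hN => hB.lowerPart_mem_SpF hI' hN) (fun Vt hVt => hB.lagrangianCompletion_mem hI' hVt)
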